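/- Let s : 𝕋 → ℝ be continuous with 0 < inf s ≤ sup s < ∞, and let g ∈ H². Then the equation T(s)[h] = g has a unique solution h ∈ H². -/

import Mathlib

/-!
On a finite combination `p = ∑ c k • e k` the quadratic form of `T` is
`⟪p, T p⟫ = (2π)⁻¹ ∫ s(u) |∑ c k e^{iku}|² du`, which is at least
`m (2π)⁻¹ ∫ |∑ c k e^{iku}|² du = m ∑ |c k|² = m ‖p‖²`. By density `T` is coercive,
`m ‖x‖² ≤ Re ⟪x, T x⟫`, and a coercive operator on a Hilbert space is bounded below and has
dense range, hence is bijective.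
-/

open MeasureTheory Complex

/-- The `n`-th Fourier coefficient of a real symbol `s`:
`t_n = ∫_{-π}^{π} s(u) e^{-inu} du/(2π)`. -/
noncomputable def fCoeffR (s : ℝ → ℝ) (n : ℤ) : ℂ :=
  (2 * Real.pi : ℂ)⁻¹ * ∫ u in (-Real.pi)..Real.pi, (s u : ℂ) * Complex.exp (-I * n * u)

open scoped ComplexConjugate InnerProductSpace

section Coercive

variable {𝕜 E : Type*} [RCLike 𝕜] [NormedAddCommGroup E] [InnerProductSpace 𝕜 E]
  {T : E →L[𝕜] E} {m : ℝ}

theorem ContinuousLinearMap.mul_norm_le_norm_apply_of_re_inner_ge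
    (hT : ∀ x, m * ‖x‖ ^ 2 ≤ RCLike.re ⟪x, T x⟫_𝕜) (x : E) : m * ‖x‖ ≤ ‖T x‖ := by
  rcases (norm_nonneg x).eq_or_lt with hx | hx
  · simp [← hx]
  · refine le_of_mul_le_mul_left ?_ hx
    calc ‖x‖ * (m * ‖x‖) = m * ‖x‖ ^ 2 := by ring
      _ ≤ RCLike.re ⟪x, T x⟫_𝕜 := hT x
      _ ≤ ‖⟪x, T x⟫_𝕜‖ := RCLike.re_le_norm _
      _ ≤ ‖x‖ * ‖T x‖ := norm_inner_le_norm _ _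

theorem ContinuousLinearMap.antilipschitzWith_of_re_inner_ge (hm : 0 < m)
    (hT : ∀ x, m * ‖x‖ ^ 2 ≤ RCLike.re ⟪x, T x⟫_𝕜) :
    AntilipschitzWith (Real.toNNReal m)⁻¹ T :=
  T.antilipschitz_of_bound fun x => by
    rw [NNReal.coe_inv, Real.coe_toNNReal _ hm.le, inv_mul_eq_div, le_div_iff₀' hm]
    exact T.mul_norm_le_norm_apply_of_re_inner_ge hT x

theorem ContinuousLinearMap.range_eq_top_of_re_inner_ge [CompleteSpace E] (hm : 0 < m)
    (hT : ∀ x, m * ‖x‖ ^ 2 ≤ RCLike.re ⟪x, T x⟫_𝕜) : T.range = ⊤ := by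
  have hclosed : IsClosed (T.range : Set E) := by
    rw [LinearMap.coe_range]
    exact (T.antilipschitzWith_of_re_inner_ge hm hT).isClosed_range T.uniformContinuous
  have : CompleteSpace T.range := hclosed.completeSpace_coe
  refine Submodule.orthogonal_eq_bot_iff.mp (Submodule.eq_bot_iff _ |>.mpr fun v hv => ?_)
  have hzero : ⟪v, T v⟫_𝕜 = 0 :=
    inner_eq_zero_symm.mp ((Submodule.mem_orthogonal _ v).mp hv _ (LinearMap.mem_range_self _ v))
  have hv0 := hT v
  rw [hzero, map_zero] at hv0
  exact norm_eq_zero.mp (pow_eq_zero_iff two_ne_zero |>.mp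
    (le_antisymm (nonpos_of_mul_nonpos_right hv0 hm) (sq_nonneg _)))

theorem ContinuousLinearMap.bijective_of_re_inner_ge [CompleteSpace E] (hm : 0 < m)
    (hT : ∀ x, m * ‖x‖ ^ 2 ≤ RCLike.re ⟪x, T x⟫_𝕜) : Function.Bijective T :=
  ⟨(T.antilipschitzWith_of_re_inner_ge hm hT).injective,
    LinearMap.range_eq_top.mp (T.range_eq_top_of_re_inner_ge hm hT)⟩

end Coercive

theorem Orthonormal.norm_sum_smul_sq {𝕜 E ι : Type*} [RCLike 𝕜] [NormedAddCommGroup E]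
    [InnerProductSpace 𝕜 E] {v : ι → E} (hv : Orthonormal 𝕜 v) (F : Finset ι) (c : ι → 𝕜) :
    ‖∑ j ∈ F, c j • v j‖ ^ 2 = ∑ j ∈ F, ‖c j‖ ^ 2 := by
  rw [norm_sq_eq_re_inner (𝕜 := 𝕜), hv.inner_sum, map_sum]
  simp only [RCLike.conj_mul]
  norm_cast

theorem integral_exp_neg_I_mul_int_mul (n : ℤ) :
    ∫ u in (-Real.pi)..Real.pi, exp (-I * n * u) = if n = 0 then (2 * Real.pi : ℂ) else 0 := by
  split_ifs with hn
  · subst hn; simp; ring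
  · have hc : (-I * n : ℂ) ≠ 0 := by simp [I_ne_zero, hn]
    rw [integral_exp_mul_complex hc, div_eq_zero_iff, sub_eq_zero]
    left
    rw [exp_eq_exp_iff_exists_int]
    exact ⟨-n, by push_cast; ring⟩

theorem fCoeffR_const (m : ℝ) (n : ℤ) :
    fCoeffR (fun _ => m) n = if n = 0 then (m : ℂ) else 0 := by
  rw [fCoeffR, intervalIntegral.integral_const_mul, integral_exp_neg_I_mul_int_mul]
  split_ifs
  · field_simp
  · simp

noncomputable def trigPoly (F : Finset ℕ) (c : ℕ → ℂ) (u : ℝ) : ℂ :=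
  ∑ k ∈ F, c k * exp (I * k * u)

theorem continuous_trigPoly (F : Finset ℕ) (c : ℕ → ℂ) : Continuous (trigPoly F c) := by
  unfold trigPoly; fun_prop

theorem sum_sum_conj_mul_fCoeffR {f : ℝ → ℝ}
    (hf : IntervalIntegrable f volume (-Real.pi) Real.pi) (F : Finset ℕ) (c : ℕ → ℂ) :
    ∑ j ∈ F, ∑ k ∈ F, conj (c j) * c k * fCoeffR f (j - k) =
      (((2 * Real.pi)⁻¹ * ∫ u in (-Real.pi)..Real.pi, f u * normSq (trigPoly F c u) : ℝ) : ℂ) := by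
  have hpt : ∀ u : ℝ, ((f u * normSq (trigPoly F c u) : ℝ) : ℂ) =
      ∑ p ∈ F ×ˢ F, conj (c p.1) * c p.2 * ((f u : ℂ) * exp (-I * ((p.1 - p.2 : ℤ) : ℂ) * u)) := by
    intro u
    rw [ofReal_mul, normSq_eq_conj_mul_self, trigPoly, map_sum, Finset.sum_mul_sum,
      Finset.mul_sum, Finset.sum_product]
    refine Finset.sum_congr rfl fun j _ => ?_
    rw [Finset.mul_sum]
    refine Finset.sum_congr rfl fun k _ => ?_
    simp only [map_mul, conj_I, conj_ofReal, conj_natCast, ← exp_conj]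
    rw [show (-I * ((j - k : ℤ) : ℂ) * u : ℂ) = -I * j * u + I * k * u by push_cast; ring,
      exp_add]
    ring
  have hint : ∀ n : ℤ, IntervalIntegrable (fun u => (f u : ℂ) * exp (-I * n * u))
      volume (-Real.pi) Real.pi := fun n =>
    IntervalIntegrable.mul_continuousOn ⟨hf.1.ofReal, hf.2.ofReal⟩
      (Continuous.continuousOn (by fun_prop))
  rw [ofReal_mul, ← intervalIntegral.integral_ofReal, intervalIntegral.integral_congr
    (fun u _ => hpt u), intervalIntegral.integral_finsetSum
    (fun p _ => (hint _).const_mul _), Finset.mul_sum, Finset.sum_product]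
  refine Finset.sum_congr rfl fun j _ => Finset.sum_congr rfl fun k _ => ?_
  rw [intervalIntegral.integral_const_mul, fCoeffR]
  push_cast
  ring

theorem mul_sum_norm_sq_le_re_sum_sum_conj_mul_fCoeffR {f : ℝ → ℝ}
    (hf : IntervalIntegrable f volume (-Real.pi) Real.pi) {m : ℝ}
    (hm : ∀ u ∈ Set.Icc (-Real.pi) Real.pi, m ≤ f u) (F : Finset ℕ) (c : ℕ → ℂ) :
    m * ∑ j ∈ F, ‖c j‖ ^ 2 ≤ (∑ j ∈ F, ∑ k ∈ F, conj (c j) * c k * fCoeffR f (j - k)).re := by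
  -- Both quadratic forms are integrals against `|trigPoly F c|²`; the constant one is diagonal.
  have hconst : ∑ j ∈ F, ∑ k ∈ F, conj (c j) * c k * fCoeffR (fun _ => m) (j - k) =
      ((m * ∑ j ∈ F, ‖c j‖ ^ 2 : ℝ) : ℂ) := by
    simp only [fCoeffR_const, sub_eq_zero, Nat.cast_inj, mul_ite, mul_zero, Finset.sum_ite_eq,
      ofReal_mul, ofReal_sum, Finset.mul_sum, ofReal_pow, ← conj_mul']
    refine Finset.sum_congr rfl fun j hj => ?_
    simp only [hj, ↓reduceIte]
    ring
  have hp : ContinuousOn (fun u => normSq (trigPoly F c u)) (Set.uIcc (-Real.pi) Real.pi) :=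
    (continuous_normSq.comp (continuous_trigPoly F c)).continuousOn
  rw [← ofReal_re (m * _), ← hconst,
    sum_sum_conj_mul_fCoeffR intervalIntegrable_const, sum_sum_conj_mul_fCoeffR hf,
    ofReal_re, ofReal_re]
  gcongr ?_ * ?_
  exact intervalIntegral.integral_mono_on (by linarith [Real.pi_pos])
    (intervalIntegrable_const.mul_continuousOn hp) (hf.mul_continuousOn hp)
    fun u hu => mul_le_mul_of_nonneg_right (hm u hu) (normSq_nonneg _)

theorem re_inner_apply_self_ge_of_inner_apply_eq_fCoeffR
    {H : Type*} [NormedAddCommGroup H] [InnerProductSpace ℂ H]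
    (e : HilbertBasis ℕ ℂ H) (T : H →L[ℂ] H) {f : ℝ → ℝ}
    (hT : ∀ j k : ℕ, ⟪e j, T (e k)⟫_ℂ = fCoeffR f (j - k))
    (hf : IntervalIntegrable f volume (-Real.pi) Real.pi) {m : ℝ}
    (hm : ∀ u ∈ Set.Icc (-Real.pi) Real.pi, m ≤ f u) (x : H) :
    m * ‖x‖ ^ 2 ≤ (⟪x, T x⟫_ℂ).re := by
  refine (Submodule.dense_iff_topologicalClosure_eq_top.2 e.dense_span).induction
    (fun x hx => ?_) (isClosed_le (by fun_prop) (by fun_prop)) x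
  obtain ⟨c, rfl⟩ := Finsupp.mem_span_range_iff_exists_finsupp.1 hx
  have hinner : ⟪∑ j ∈ c.support, c j • e j, T (∑ k ∈ c.support, c k • e k)⟫_ℂ =
      ∑ j ∈ c.support, ∑ k ∈ c.support, conj (c j) * c k * fCoeffR f (j - k) := by
    rw [map_sum, sum_inner]
    refine Finset.sum_congr rfl fun j _ => ?_
    rw [inner_sum]
    refine Finset.sum_congr rfl fun k _ => ?_
    rw [map_smul, inner_smul_left, inner_smul_right, hT]
    ring
  rw [Finsupp.sum, hinner, e.orthonormal.norm_sum_smul_sq]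
  exact mul_sum_norm_sq_le_re_sum_sum_conj_mul_fCoeffR hf hm _ _

/-- `H²` is modelled as an abstract Hilbert space with Hardy basis `e`, and `T(s)` by its matrix
`⟪e j, T (e k)⟫ = t_{j-k}`. -/
theorem toeplitz_equation_unique_solution_general
    (s : ℝ → ℝ) (hs : Continuous s)
    (m : ℝ) (hm : 0 < m) (hlb : ∀ u, m ≤ s u)
    (H2 : Type*) [NormedAddCommGroup H2] [InnerProductSpace ℂ H2] [CompleteSpace H2]
    (e : HilbertBasis ℕ ℂ H2)
    (T : H2 →L[ℂ] H2)
    (hT : ∀ j k : ℕ, (inner ℂ (e j) (T (e k)) : ℂ) = fCoeffR s ((j : ℤ) - (k : ℤ)))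
    (g : H2) :
    ∃! h : H2, T h = g :=
  (T.bijective_of_re_inner_ge hm fun x => re_inner_apply_self_ge_of_inner_apply_eq_fCoeffR e T hT
    (hs.intervalIntegrable _ _) (fun u _ => hlb u) x).existsUnique g

/-- Let `s : 𝕋 → ℝ` be continuous with `0 < inf s ≤ sup s < ∞` and let `g ∈ H²`.
Then the Toeplitz equation `T(s)[h] = g` has a unique solution `h ∈ H²`.
The Hardy space is modeled as a Hilbert space with Hardy basis `e`, and `T(s)`
is the operator with matrix elements `⟨e j, T e k⟩ = t_{j-k}`. -/
theorem toeplitz_equation_unique_solution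
    (s : ℝ → ℝ) (hs : Continuous s) (hper : ∀ u, s (u + 2 * Real.pi) = s u)
    (m : ℝ) (hm : 0 < m) (hlb : ∀ u, m ≤ s u)
    (M : ℝ) (hub : ∀ u, s u ≤ M)
    (H2 : Type*) [NormedAddCommGroup H2] [InnerProductSpace ℂ H2] [CompleteSpace H2]
    (e : HilbertBasis ℕ ℂ H2)
    (T : H2 →L[ℂ] H2)
    (hT : ∀ j k : ℕ, (inner ℂ (e j) (T (e k)) : ℂ) = fCoeffR s ((j : ℤ) - (k : ℤ)))
    (g : H2) :
    ∃! h : H2, T h = g :=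
  toeplitz_equation_unique_solution_general s hs m hm hlb H2 e T hT g
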